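/- arXiv:2003.12819 — 2 statements merged into one kernel-verified Lean document; each statement's English description precedes it below -/
import Mathlib

section
/- (Join refine): If ι₁ ⊑ γ(g₁) and ι₂ ⊑ γ(g₂), then ι₁ ⊻ ι₂ ⊑ γ(g₁ ⊻c g₂), where ⊻ on intervals is componentwise join and ⊻c is the consistent join of gradual labels. -/
variable {L : Type*}

/-- A label-interval: a pair (lower, upper) of lattice elements. -/
abbrev Iv (L : Type*) := L × L

/-- Precision order on intervals: `i ⊑ j` iff `i` is contained in `j`. -/
def ivPrec [Lattice L] (i j : Iv L) : Prop := j.1 ≤ i.1 ∧ i.2 ≤ j.2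

/-- Concretization of a gradual label (`none` is the dynamic label `?`). -/
def gamma [Lattice L] [BoundedOrder L] : Option L → Iv L
  | none => (⊥, ⊤)
  | some l => (l, l)

/-- Componentwise interval join. -/
def ivJoin [Lattice L] (i j : Iv L) : Iv L := (i.1 ⊔ j.1, i.2 ⊔ j.2)

/-- Interval intersection `⋈`. -/
def ivInter [Lattice L] (i j : Iv L) : Iv L := (i.1 ⊔ j.1, i.2 ⊓ j.2)

/-- First component of `refine`. -/
def refineFst [Lattice L] (i j : Iv L) : Iv L := (i.1, i.2 ⊓ j.2)

/-- Second component of `refine`. -/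
def refineSnd [Lattice L] (i j : Iv L) : Iv L := (j.1 ⊔ i.1, j.2)

/-- `refine i j` is defined iff both resulting intervals are valid. -/
def refineDefined [Lattice L] (i j : Iv L) : Prop :=
  i.1 ≤ i.2 ⊓ j.2 ∧ j.1 ⊔ i.1 ≤ j.2

/-- `restrictLB`. -/
def restrictLB [Lattice L] (i j : Iv L) : Iv L := (i.1 ⊔ j.1, i.2)

def restrictLBDefined [Lattice L] (i j : Iv L) : Prop := i.1 ⊔ j.1 ≤ i.2

/-- Consistent join of gradual labels. -/
def cjoin [Lattice L] [BoundedOrder L] [DecidableEq L] : Option L → Option L → Option L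
  | some a, some b => some (a ⊔ b)
  | none, some g => if g = (⊤ : L) then some ⊤ else none
  | some g, none => if g = (⊤ : L) then some ⊤ else none
  | none, none => none

/-- Precision order on gradual labels. -/
def gPrec : Option L → Option L → Prop
  | _, none => True
  | some a, some b => a = b
  | none, some _ => False

/-- Consistent ordering on gradual labels. -/
def cLe [Lattice L] : Option L → Option L → Prop
  | none, _ => True
  | _, none => True
  | some a, some b => a ≤ b

/-- An interval is high w.r.t. attacker label `ℓA`. -/
def highIv [Lattice L] (lA : L) (i : Iv L) : Prop := ¬ i.1 ≤ lA

/-- join refine. -/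
theorem join_refine [Lattice L] [BoundedOrder L] [DecidableEq L]
    (i1 i2 : Iv L) (g1 g2 : Option L)
    (h1 : ivPrec i1 (gamma g1)) (h2 : ivPrec i2 (gamma g2)) :
    ivPrec (ivJoin i1 i2) (gamma (cjoin g1 g2)) := by
  obtain ⟨a1, b1⟩ := h1
  obtain ⟨a2, b2⟩ := h2
  cases g1 with
  | none =>
    cases g2 with
    | none =>
      exact ⟨bot_le, le_top⟩
    | some l2 =>
      by_cases h : l2 = (⊤ : L) <;>
        simp only [cjoin, gamma, ivJoin, ivPrec, if_pos, if_neg, h, ↓reduceIte]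
      · subst h
        simp only [gamma, ivPrec] at a2 b2 ⊢
        exact ⟨le_sup_of_le_right a2, le_top⟩
      · exact ⟨bot_le, le_top⟩
  | some l1 =>
    cases g2 with
    | none =>
      by_cases h : l1 = (⊤ : L) <;>
        simp only [cjoin, gamma, ivJoin, ivPrec, if_pos, if_neg, h, ↓reduceIte]
      · subst h
        simp only [gamma, ivPrec] at a1 b1 ⊢
        exact ⟨le_sup_of_le_left a1, le_top⟩
      · exact ⟨bot_le, le_top⟩
    | some l2 =>
      simp only [cjoin, gamma, ivJoin, ivPrec] at *
      exact ⟨sup_le (le_sup_of_le_left a1) (le_sup_of_le_right a2),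
        sup_le (le_sup_of_le_left b1) (le_sup_of_le_right b2)⟩
end

section
/- (Join maintains high): If ι = [ℓ_l, ℓ_r] with ¬(ℓ_l ≤ ℓ_A) and ι ⊑ γ(g), and ι' ⊑ γ(g'), then the componentwise join ι ⊻ ι' has its lower endpoint not ≤ ℓ_A and satisfies ι ⊻ ι' ⊑ γ(g ⊻c g'). In particular, ι ⊻ ι' is high with respect to ℓ_A. -/
variable {L : Type*}

/-- join maintains high. -/
theorem join_high [Lattice L] [BoundedOrder L] [DecidableEq L]
    (lA : L) (i i' : Iv L) (g g' : Option L)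
    (hH : ¬ i.1 ≤ lA) (h1 : ivPrec i (gamma g)) (h2 : ivPrec i' (gamma g')) :
    ¬ (ivJoin i i').1 ≤ lA ∧ ivPrec (ivJoin i i') (gamma (cjoin g g')) := by
  obtain ⟨ha1, ha2⟩ := h1
  obtain ⟨hb1, hb2⟩ := h2
  refine ⟨fun h => hH (le_trans le_sup_left h), ?_⟩
  cases g with
  | none =>
    cases g' with
    | none => exact ⟨bot_le, le_top⟩
    | some b =>
      simp only [cjoin]
      split
      · rename_i hb; subst hb
        simp only [gamma] at hb1 ⊢
        exact ⟨le_trans hb1 le_sup_right, le_top⟩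
      · exact ⟨bot_le, le_top⟩
  | some a =>
    cases g' with
    | none =>
      simp only [cjoin]
      split
      · rename_i hb; subst hb
        simp only [gamma] at ha1 ⊢
        exact ⟨le_trans ha1 le_sup_left, le_top⟩
      · exact ⟨bot_le, le_top⟩
    | some b =>
      simp only [cjoin, gamma] at *
      exact ⟨sup_le_sup ha1 hb1, sup_le_sup ha2 hb2⟩
end
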